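/- In a finite Dung argumentation framework, every stable extension is a semi-stable extension. -/

import Mathlib

def conflictFree {Args : Type*} (R : Args → Args → Prop) (B : Set Args) : Prop :=
  ∀ a ∈ B, ∀ b ∈ B, ¬ R a b

def defends {Args : Type*} (R : Args → Args → Prop) (B : Set Args) (b : Args) : Prop :=
  ∀ a, R a b → ∃ c ∈ B, R c a

def admissible {Args : Type*} (R : Args → Args → Prop) (B : Set Args) : Prop :=
  conflictFree R B ∧ ∀ b ∈ B, defends R B b

def complete {Args : Type*} (R : Args → Args → Prop) (B : Set Args) : Prop :=
  admissible R B ∧ ∀ b, defends R B b → b ∈ B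

def plusSet {Args : Type*} (R : Args → Args → Prop) (B : Set Args) : Set Args :=
  {a | ∃ b ∈ B, R b a}

def stable {Args : Type*} (R : Args → Args → Prop) (B : Set Args) : Prop :=
  conflictFree R B ∧ B ∪ plusSet R B = Set.univ

def semiStable {Args : Type*} (R : Args → Args → Prop) (B : Set Args) : Prop :=
  complete R B ∧
    ∀ C, complete R C → (B ∪ plusSet R B) ⊆ (C ∪ plusSet R C) →
      (B ∪ plusSet R B) = (C ∪ plusSet R C)

namespace stable

variable {Args : Type*} {R : Args → Args → Prop} {B : Set Args}

theorem mem_plusSet_of_notMem (h : stable R B) {a : Args} (ha : a ∉ B) : a ∈ plusSet R B :=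
  (h.2 ▸ Set.mem_univ a).resolve_left ha

theorem defends (h : stable R B) {b : Args} (hb : b ∈ B) : _root_.defends R B b :=
  fun a hab => h.mem_plusSet_of_notMem fun haB => h.1 a haB b hb hab

theorem admissible (h : stable R B) : _root_.admissible R B :=
  ⟨h.1, fun _ hb => h.defends hb⟩

theorem complete (h : stable R B) : _root_.complete R B := by
  refine ⟨h.admissible, fun b hdef => ?_⟩
  by_contra hb
  obtain ⟨c, hc, hcb⟩ := h.mem_plusSet_of_notMem hb
  obtain ⟨d, hd, hdc⟩ := hdef c hcb
  exact h.1 d hd c hc hdc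

end stable

theorem stable_is_semiStable_general
    {Args : Type*} (R : Args → Args → Prop) (B : Set Args)
    (h : stable R B) : semiStable R B := by
  refine ⟨h.complete, fun C _ hsub => ?_⟩
  rw [h.2] at hsub ⊢
  exact (Set.univ_subset_iff.mp hsub).symm

theorem stable_is_semiStable
    {Args : Type*} [Fintype Args] (R : Args → Args → Prop) (B : Set Args)
    (h : stable R B) : semiStable R B :=
  stable_is_semiStable_general R B h
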